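/- arXiv:1405.4892 — 7 statements merged into one kernel-verified Lean document; each statement's English description precedes it below -/
import Mathlib

section
/- Every nonempty word w over Σ admits a factorization w = w₁w₂⋯w_m such that each w_i is a Lyndon word and w₁ ≥ w₂ ≥ ⋯ ≥ w_m lexicographically, and this factorization is unique. -/
variable {α : Type*}

/-- The rotation `rot(w,i) = w[i..|w|-1] w[0..i-1]`. -/
def rot (w : List α) (i : ℕ) : List α := w.drop i ++ w.take i

/-- A Lyndon word: a nonempty word strictly smaller than all of its proper rotations. -/
def IsLyndon [LinearOrder α] (w : List α) : Prop :=
  w ≠ [] ∧ ∀ i, 0 < i → i < w.length → w < rot w i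

/-- `IsCFL w f` : `f` is the Chen–Fox–Lyndon factorization of `w`, i.e. a
nonincreasing sequence of Lyndon words whose concatenation is `w`. -/
def IsCFL [LinearOrder α] (w : List α) (f : List (List α)) : Prop :=
  f.flatten = w ∧ (∀ x ∈ f, IsLyndon x) ∧ f.Chain' (· ≥ ·)

/-- `u^k` : the `k`-fold concatenation of the word `u`. -/
def listPow (u : List α) (k : ℕ) : List α := (List.replicate k u).flatten

/-- `P`: the set of nonempty prefixes of Lyndon words. -/
def InP [LinearOrder α] (w : List α) : Prop :=
  w ≠ [] ∧ ∃ u : List α, IsLyndon (w ++ u)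

/-- `P' = P ∪ { c^k : k ≥ 2 }` where `c` is the maximum symbol of the alphabet. -/
def InP' [LinearOrder α] (w : List α) : Prop :=
  InP w ∨ ∃ (c : α) (k : ℕ), 2 ≤ k ∧ (∀ a : α, a ≤ c) ∧ w = List.replicate k c

/-- A border of `w`: a proper prefix of `w` that is also a suffix of `w`. -/
def IsBorder (b w : List α) : Prop := b <+: w ∧ b <:+ w ∧ b.length < w.length

/-- The length of the longest common prefix of two words. -/
def lcpLen [DecidableEq α] : List α → List α → ℕ
  | a :: u, b :: v => if a = b then lcpLen u v + 1 else 0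
  | _, _ => 0

/-!
Two facts about Lyndon words drive the proof: a Lyndon word is strictly smaller than each of its
proper suffixes, and the concatenation `u ++ v` of Lyndon words `u < v` is again Lyndon.

Existence: prepend a letter to a factorization of the rest of the word and merge the leading
factor with its successor as long as it is smaller than it.

Uniqueness: a Lyndon prefix of a product `ℓ₁ ℓ₂ ⋯` of words with `ℓ₁ ≥ ℓ₂ ≥ ⋯` is at most
`ℓ₁`, since it is at most its suffix inside the factor where it ends. So the first factors of two
factorizations bound each other, hence coincide, and one concludes by induction.
-/

section LexOrder

variable [LinearOrder α] {u v x y : List α}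

theorem List.IsPrefix.le_lex (h : u <+: v) : u ≤ v :=
  not_lt.mp (List.IsPrefix.le h)

theorem List.lt_of_append_lt_append_left (w : List α) (h : w ++ x < w ++ y) : x < y :=
  lt_imp_lt_of_le_imp_le (fun hyx => not_lt.mp (List.append_left_le (not_lt.mpr hyx))) h

theorem List.append_lt_append_of_lt_of_not_prefix :
    ∀ {u v : List α}, u < v → ¬ u <+: v → ∀ x y : List α, u ++ x < v ++ y
  | [], _, _, hp, _, _ => absurd List.nil_prefix hp
  | _ :: _, [], h, _, _, _ => absurd h (List.not_lt_nil _)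
  | a :: u, b :: v, h, hp, x, y => by
    rcases List.cons_lt_cons_iff.mp h with hab | ⟨rfl, huv⟩
    · exact List.cons_lt_cons_iff.mpr (Or.inl hab)
    · exact List.cons_lt_cons_iff.mpr <| Or.inr ⟨rfl,
        List.append_lt_append_of_lt_of_not_prefix huv
          (fun h => hp (List.cons_prefix_cons.mpr ⟨rfl, h⟩)) x y⟩

theorem List.append_lt_append_of_lt_of_length_le (h : u < v) (hlen : v.length ≤ u.length)
    (x y : List α) : u ++ x < v ++ y :=
  List.append_lt_append_of_lt_of_not_prefix h
    (fun hp => h.ne (hp.eq_of_length (le_antisymm hp.length_le hlen))) x y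

end LexOrder

theorem rot_append_length (p s : List α) : rot (p ++ s) p.length = s ++ p := by
  simp [rot]

section Lyndon

variable [LinearOrder α] {p s u v w : List α}

theorem IsLyndon.ne_nil (hw : IsLyndon w) : w ≠ [] := hw.1

theorem IsLyndon.singleton (a : α) : IsLyndon [a] :=
  ⟨List.cons_ne_nil a [], fun i hi0 hi => by simp at hi; omega⟩

theorem IsLyndon.lt_swap (hw : IsLyndon (p ++ s)) (hp : p ≠ []) (hs : s ≠ []) :
    p ++ s < s ++ p := by
  have h := hw.2 p.length (List.length_pos_iff.mpr hp) (by simp [List.length_pos_iff.mpr hs])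
  rwa [rot_append_length] at h

theorem IsLyndon.lt_suffix (hw : IsLyndon (p ++ s)) (hp : p ≠ []) (hs : s ≠ []) : p ++ s < s := by
  have hswap := hw.lt_swap hp hs
  by_contra hle
  have hslt : s < p ++ s := lt_of_le_of_ne (not_lt.mp hle) fun h => by
    simpa [hp] using congrArg List.length h
  by_cases hpre : s <+: p ++ s
  · obtain ⟨t, ht⟩ := hpre
    -- `s` is then a border: rotating at `|s|` and at `|p|` compares `t` and `p` both ways.
    have ht0 : t ≠ [] := by
      rintro rfl
      simp [hp] at ht
    have hst : s ++ t < t ++ s := (ht ▸ hw).lt_swap hs ht0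
    have htp : t < p := List.lt_of_append_lt_append_left s (ht ▸ hswap)
    have hlen : p.length = t.length := by
      have := congrArg List.length ht
      simp only [List.length_append] at this
      omega
    exact lt_asymm hst (ht ▸ List.append_lt_append_of_lt_of_length_le htp hlen.le s s)
  · exact lt_asymm hswap (by simpa using List.append_lt_append_of_lt_of_not_prefix hslt hpre p [])

theorem IsLyndon.le_suffix (hw : IsLyndon (p ++ s)) (hs : s ≠ []) : p ++ s ≤ s := by
  rcases eq_or_ne p [] with rfl | hp
  · exact le_rfl
  · exact (hw.lt_suffix hp hs).le

theorem isLyndon_of_lt_suffix (hw : w ≠ [])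
    (h : ∀ p s, p ≠ [] → s ≠ [] → w = p ++ s → w < s) : IsLyndon w := by
  refine ⟨hw, fun i hi0 hi => ?_⟩
  have hp : w.take i ≠ [] := by simp [List.take_eq_nil_iff, hw]; omega
  have hs : w.drop i ≠ [] := by simp; omega
  have hws := h _ _ hp hs (List.take_append_drop i w).symm
  simpa [rot] using List.append_lt_append_of_lt_of_length_le hws (by simp) [] (w.take i)

theorem IsLyndon.append (hu : IsLyndon u) (hv : IsLyndon v) (huv : u < v) :
    IsLyndon (u ++ v) := by
  have huv_v : u ++ v < v := by
    by_cases hpre : u <+: v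
    · obtain ⟨t, rfl⟩ := hpre
      have ht : t ≠ [] := by
        rintro rfl
        simp at huv
      exact List.append_left_lt (hv.lt_suffix hu.ne_nil ht)
    · simpa using List.append_lt_append_of_lt_of_not_prefix huv hpre v []
  refine isLyndon_of_lt_suffix (by simp [hu.ne_nil]) fun p s hp hs hps => ?_
  rcases List.append_eq_append_iff.mp hps with ⟨a, rfl, rfl⟩ | ⟨c, rfl, rfl⟩
  · rcases eq_or_ne a [] with rfl | ha
    · simpa using huv_v
    · exact huv_v.trans (hv.lt_suffix ha hs)
  · rcases eq_or_ne c [] with rfl | hc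
    · simpa using huv_v
    · simpa using List.append_lt_append_of_lt_of_length_le (hu.lt_suffix hp hc) (by simp) v v

end Lyndon

section Factorization

variable [LinearOrder α] {w : List α} {f g : List (List α)}

theorem IsCFL.tail {a : List α} (hf : IsCFL w (a :: f)) : IsCFL f.flatten f :=
  ⟨rfl, fun x hx => hf.2.1 x (List.mem_cons_of_mem a hx), hf.2.2.tail⟩

theorem IsCFL.eq_nil_iff (hf : IsCFL w f) : f = [] ↔ w = [] := by
  refine ⟨fun h => by simp [← hf.1, h], fun hw => ?_⟩
  cases f with
  | nil => rfl
  | cons a f => simpa [hw, (hf.2.1 a List.mem_cons_self).ne_nil] using hf.1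

theorem IsCFL.exists_cons {x : List α} (hx : IsLyndon x) (hf : IsCFL w f) :
    ∃ g, IsCFL (x ++ w) g := by
  induction f generalizing x w with
  | nil => exact ⟨[x], by simp [← hf.1], by simpa using hx, List.isChain_singleton x⟩
  | cons y f ih =>
    by_cases hyx : y ≤ x
    · exact ⟨x :: y :: f, by simp [← hf.1], List.forall_mem_cons.mpr ⟨hx, hf.2.1⟩,
        List.isChain_cons_cons.mpr ⟨hyx, hf.2.2⟩⟩
    · obtain ⟨g, hg⟩ := ih (hx.append (hf.2.1 y List.mem_cons_self) (not_le.mp hyx)) hf.tail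
      exact ⟨g, by simpa [← hf.1] using hg⟩

theorem exists_isCFL (w : List α) : ∃ f, IsCFL w f := by
  induction w with
  | nil => exact ⟨[], rfl, by simp, List.isChain_nil⟩
  | cons a w ih =>
    obtain ⟨f, hf⟩ := ih
    exact IsCFL.exists_cons (IsLyndon.singleton a) hf

/-- The factors are peeled off `r` until `r` ends inside one of them; then `s ++ r ≤ r` is at most
that factor. -/
theorem le_of_isLyndon_of_prefix_flatten {m : List α} :
    ∀ {g : List (List α)}, (∀ x ∈ g, x ≤ m) → ∀ {s r : List α}, IsLyndon (s ++ r) → r ≠ [] →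
      r <+: g.flatten → s ++ r ≤ m
  | [], _, _, _, _, hr, hpre => absurd (List.prefix_nil.mp hpre) hr
  | x :: g, hg, s, r, hsr, hr, hpre => by
    rw [List.flatten_cons] at hpre
    by_cases hlen : r.length ≤ x.length
    · calc s ++ r ≤ r := hsr.le_suffix hr
        _ ≤ x := (List.prefix_of_prefix_length_le hpre (List.prefix_append x g.flatten) hlen).le_lex
        _ ≤ m := hg x List.mem_cons_self
    · obtain ⟨r, rfl⟩ :=
        List.prefix_of_prefix_length_le (List.prefix_append x g.flatten) hpre (by omega)
      have hr' : r ≠ [] := by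
        rintro rfl
        simp at hlen
      simpa using le_of_isLyndon_of_prefix_flatten (fun y hy => hg y (List.mem_cons_of_mem x hy))
        (s := s ++ x) (by simpa using hsr) hr' ((List.prefix_append_right_inj x).mp hpre)

theorem IsLyndon.le_of_prefix_flatten {l m : List α} (hl : IsLyndon l) (hg : ∀ x ∈ g, x ≤ m)
    (hpre : l <+: g.flatten) : l ≤ m :=
  le_of_isLyndon_of_prefix_flatten hg (s := []) hl hl.ne_nil hpre

theorem IsCFL.head_le {a b : List α} (hf : IsCFL w (a :: f)) (hg : IsCFL w (b :: g)) : a ≤ b := by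
  have hbound : ∀ x ∈ b :: g, x ≤ b := List.forall_mem_cons.mpr
    ⟨le_rfl, (List.pairwise_cons.mp (List.isChain_iff_pairwise.mp hg.2.2)).1⟩
  refine (hf.2.1 a List.mem_cons_self).le_of_prefix_flatten hbound ?_
  rw [hg.1, ← hf.1]
  exact List.prefix_append a f.flatten

theorem IsCFL.unique (hf : IsCFL w f) (hg : IsCFL w g) : f = g := by
  induction f generalizing w g with
  | nil => exact (hg.eq_nil_iff.mpr (hf.eq_nil_iff.mp rfl)).symm
  | cons a f ih =>
    cases g with
    | nil => exact hf.eq_nil_iff.mpr (hg.eq_nil_iff.mp rfl)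
    | cons b g =>
      obtain rfl : a = b := le_antisymm (hf.head_le hg) (hg.head_le hf)
      have hflat : f.flatten = g.flatten :=
        List.append_cancel_left (hf.1.trans hg.1.symm : a ++ f.flatten = a ++ g.flatten)
      rw [ih hf.tail (hflat ▸ hg.tail)]

end Factorization

theorem cfl_exists_unique_general [LinearOrder α] (w : List α) :
    ∃! f : List (List α), IsCFL w f := by
  obtain ⟨f, hf⟩ := exists_isCFL w
  exact ⟨f, hf, fun g hg => hg.unique hf⟩

/-- Every nonempty word admits a unique factorization into a nonincreasing
sequence of Lyndon words (Chen–Fox–Lyndon theorem). -/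
theorem cfl_exists_unique [LinearOrder α] (w : List α) (hw : w ≠ []) :
    ∃! f : List (List α), IsCFL w f :=
  cfl_exists_unique_general w
end

section
/- Let w be a nonempty word over Σ and let w₁ be the longest prefix of w that is a Lyndon word, so that w = w₁w'. Then the Lyndon factorization of w is w₁ followed by the Lyndon factorization of w', i.e., CFL(w) = w₁ CFL(w'). -/
/-!
If `w₁ < g` for the first factor `g` of `CFL(w')`, then `w₁ g` is again a Lyndon word: Lyndon words
are exactly the nonempty words smaller than all their proper suffixes, and for Lyndon `u < v` every
proper suffix of `uv` exceeds `uv` (those starting in `v` because `uv < v`). So `w₁ g` would be a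
Lyndon prefix of `w` longer than `w₁`; hence `w₁ ≥ g`, and prepending `w₁` keeps the factorization
nonincreasing.
-/

variable {α : Type*}

namespace List

theorem isPrefix_or_append_lt_append_of_lt [LT α] {u v : List α} (x y : List α) (h : u < v) :
    u <+: v ∨ u ++ x < v ++ y := by
  induction (h : Lex (· < ·) u v) with
  | nil => exact .inl (nil_prefix)
  | cons _ ih => exact ih.imp (fun ⟨t, ht⟩ => ⟨t, by simp [← ht]⟩) Lex.cons
  | rel hab => exact .inr (Lex.rel hab)

variable [LinearOrder α]

theorem append_lt_append_of_lt_of_length_eq {u v : List α} (x y : List α) (h : u < v)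
    (hlen : u.length = v.length) : u ++ x < v ++ y :=
  (isPrefix_or_append_lt_append_of_lt x y h).resolve_left
    fun hp => (hp.eq_of_length hlen ▸ h).false

theorem append_lt_append_left_iff (u : List α) {x y : List α} : u ++ x < u ++ y ↔ x < y :=
  ⟨fun h => by_contra fun hxy => append_left_le (List.not_lt.1 hxy) h, append_left_lt⟩

end List

open List

section

variable [LinearOrder α]

namespace IsLyndon

theorem lt_drop {w : List α} (h : IsLyndon w) {i : ℕ} (hi0 : 0 < i) (hi : i < w.length) :
    w < w.drop i := by
  by_contra! hle
  have hsw : w.drop i < w := hle.lt_of_ne fun heq => by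
    have := congrArg length heq
    simp only [length_drop] at this
    omega
  rcases isPrefix_or_append_lt_append_of_lt (w.take i) [] hsw with ⟨t, hst⟩ | hlt
  · -- `w = t₀ s = s t` with `t₀ = w.take i`, `s = w.drop i`: the rotations by `|t₀|` and by `|s|`
    -- compare `t` with `t₀` in opposite directions.
    set s := w.drop i
    have hslen : s.length = w.length - i := length_drop ..
    have htlen : t.length = (w.take i).length := by
      have := congrArg length hst
      simp only [length_append, length_take] at this ⊢
      omega
    have htt₀ : t < w.take i :=
      (append_lt_append_left_iff s).1 (lt_of_eq_of_lt hst (h.2 i hi0 hi))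
    have hts : w < t ++ s := by
      simpa [rot, ← hst] using h.2 s.length (by omega) (by omega)
    have := append_lt_append_of_lt_of_length_eq s s htt₀ htlen
    rw [take_append_drop] at this
    exact (hts.trans this).false
  · exact ((h.2 i hi0 hi).trans (by simpa [rot] using hlt)).false

theorem of_lt_drop {w : List α} (hne : w ≠ [])
    (h : ∀ i, 0 < i → i < w.length → w < w.drop i) : IsLyndon w := by
  refine ⟨hne, fun i hi0 hi => ?_⟩
  rcases isPrefix_or_append_lt_append_of_lt [] (w.take i) (h i hi0 hi) with hp | hlt
  · exact absurd hp.length_le (by simp only [length_drop]; omega)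
  · simpa [rot] using hlt

theorem append_lt_of_lt {u v : List α} (hu : u ≠ []) (hv : IsLyndon v) (huv : u < v) :
    u ++ v < v := by
  rcases isPrefix_or_append_lt_append_of_lt v [] huv with ⟨t, rfl⟩ | hlt
  · have ht : t ≠ [] := by
      rintro rfl
      simp at huv
    have hvt : u ++ t < t := by
      simpa using hv.lt_drop (length_pos_iff.2 hu) (by simpa using length_pos_iff.2 ht)
    exact (append_lt_append_left_iff u).2 hvt
  · simpa using hlt

theorem append_s3 {u v : List α} (hu : IsLyndon u) (hv : IsLyndon v) (huv : u < v) :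
    IsLyndon (u ++ v) := by
  have huvv : u ++ v < v := append_lt_of_lt hu.1 hv huv
  refine of_lt_drop (by simp [hu.1]) fun i hi0 hi => ?_
  rw [length_append] at hi
  rcases lt_trichotomy i u.length with hiu | rfl | hui
  · rcases isPrefix_or_append_lt_append_of_lt v v (hu.lt_drop hi0 hiu) with hp | hlt
    · exact absurd hp.length_le (by simp only [length_drop]; omega)
    · rwa [drop_append_of_le_length hiu.le]
  · simpa using huvv
  · have hdrop : (u ++ v).drop i = v.drop (i - u.length) := by
      rw [drop_append, drop_eq_nil_of_le (by omega), nil_append]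
    rw [hdrop]
    exact huvv.trans (hv.lt_drop (by omega) (by omega))

end IsLyndon

theorem IsCFL.cons {w₁ w' : List α} {f : List (List α)} (hf : IsCFL w' f) (h₁ : IsLyndon w₁)
    (hhead : ∀ g ∈ f.head?, g ≤ w₁) : IsCFL (w₁ ++ w') (w₁ :: f) :=
  ⟨by simp [hf.1], forall_mem_cons.2 ⟨h₁, hf.2.1⟩, isChain_cons.2 ⟨hhead, hf.2.2⟩⟩

end

theorem cfl_longest_lyndon_prefix_general [LinearOrder α] (w w₁ w' : List α)
    (hsplit : w = w₁ ++ w') (h1 : IsLyndon w₁)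
    (hlongest : ∀ p : List α, p <+: w → IsLyndon p → p.length ≤ w₁.length)
    (f : List (List α)) (hf : IsCFL w' f) :
    IsCFL w (w₁ :: f) := by
  subst hsplit
  refine hf.cons h1 fun g hg => not_lt.1 fun hlt => ?_
  obtain ⟨rest, rfl⟩ := head?_eq_some_iff.1 hg
  have hg : IsLyndon g := hf.2.1 g mem_cons_self
  have hprefix : w₁ ++ g <+: w₁ ++ w' := ⟨rest.flatten, by simp [← hf.1]⟩
  have := hlongest _ hprefix (h1.append_s3 hg hlt)
  exact hg.1 (length_eq_zero_iff.1 (by simpa using this))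

/-- If `w₁` is the longest Lyndon prefix of `w = w₁ w'`, then
`CFL(w) = w₁ CFL(w')`. -/
theorem cfl_longest_lyndon_prefix [LinearOrder α] (w w₁ w' : List α) (hw : w ≠ [])
    (hsplit : w = w₁ ++ w') (h1 : IsLyndon w₁)
    (hlongest : ∀ p : List α, p <+: w → IsLyndon p → p.length ≤ w₁.length)
    (f : List (List α)) (hf : IsCFL w' f) :
    IsCFL w (w₁ :: f) :=
  cfl_longest_lyndon_prefix_general w w₁ w' hsplit h1 hlongest f hf
end

section
/- P' = { (uv)^k u : u ∈ Σ*, v ∈ Σ⁺, k ≥ 1 and uv ∈ L }, i.e., a word belongs to P' if and only if it can be written as (uv)^k u for some (possibly empty) word u, nonempty word v, and integer k ≥ 1 with uv a Lyndon word. -/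
variable {α : Type*}

/-!
A nonempty word is Lyndon iff it is strictly smaller than each of its proper nonempty suffixes,
and in this form the property is easy to check on `t^k u a`. If `t = u b v` is Lyndon, then
`t^k u a` is again Lyndon when `a > b` (Duval), while for `a < b` it is not even a prefix of a
Lyndon word, since its suffix starting with `u a` is smaller than it. Reading a word of `P'`
letter by letter, its decomposition `(uv)^k u` is therefore either extended (`a = b`),
restarted as one Lyndon word (`a > b`), or ruled out (`a < b`). Conversely `(uv)^k u` is a prefix
of the Lyndon word `(uv)^(k+1) a` for any letter `a` above the first letter of `uv`; if there is
no such letter, then `uv` is the maximal letter `c` alone, which gives the words `c^k`.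
-/

namespace List

theorem append_lt_append_of_lt_of_not_prefix_s4 [LT α] {u v : List α} (h : u < v)
    (hp : ¬ u <+: v) (x y : List α) : u ++ x < v ++ y := by
  induction h with
  | nil => exact absurd nil_prefix hp
  | cons _ ih => exact Lex.cons (ih fun hp' => hp (cons_prefix_cons.mpr ⟨rfl, hp'⟩))
  | rel h => exact Lex.rel h

theorem append_lt_append_of_lt_of_length_le_s4 [LinearOrder α] {u v : List α} (h : u < v)
    (hlen : v.length ≤ u.length) (x y : List α) : u ++ x < v ++ y :=
  append_lt_append_of_lt_of_not_prefix_s4 h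
    (fun hp => h.ne (hp.eq_of_length_le hlen)) x y

end List

open List

@[simp]
theorem listPow_zero (u : List α) : listPow u 0 = [] := rfl

theorem listPow_succ (u : List α) (k : ℕ) : listPow u (k + 1) = u ++ listPow u k := by
  simp [listPow, replicate_succ]

theorem listPow_succ' (u : List α) (k : ℕ) : listPow u (k + 1) = listPow u k ++ u := by
  simp [listPow, replicate_succ']

theorem isSuffix_listPow_append {t w s : List α} {k : ℕ} (h : s <:+ listPow t k ++ w) :
    s <:+ w ∨ ∃ r m, r <:+ t ∧ r ≠ [] ∧ m < k ∧ s = r ++ (listPow t m ++ w) := by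
  induction k generalizing s with
  | zero => exact Or.inl h
  | succ k ih =>
    obtain ⟨p, hp⟩ := h
    rw [listPow_succ, append_assoc] at hp
    rcases append_eq_append_iff.mp hp with ⟨r, ht, hs⟩ | ⟨q, -, hX⟩
    · rcases eq_or_ne r [] with rfl | hr0
      · exact (ih (by rw [hs, nil_append])).imp_right fun ⟨r, m, hr, hr0, hm, hs⟩ =>
          ⟨r, m, hr, hr0, Nat.lt_succ_of_lt hm, hs⟩
      · exact Or.inr ⟨r, k, ⟨p, ht.symm⟩, hr0, k.lt_succ_self, hs⟩
    · exact (ih ⟨q, hX.symm⟩).imp_right fun ⟨r, m, hr, hr0, hm, hs⟩ =>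
        ⟨r, m, hr, hr0, Nat.lt_succ_of_lt hm, hs⟩

theorem strictAnti_listPow_append [LinearOrder α] {t w : List α} (h : t ++ w < w) :
    StrictAnti fun n => listPow t n ++ w := by
  refine strictAnti_nat_of_succ_lt fun n => ?_
  induction n with
  | zero => simpa [listPow_succ] using h
  | succ n ih => simpa only [listPow_succ, append_assoc] using append_left_lt (l₁ := t) ih

section Lyndon

variable [LinearOrder α]

theorem isLyndon_singleton (c : α) : IsLyndon [c] :=
  ⟨cons_ne_nil c [], fun i _ hi => by simp at hi; omega⟩

theorem IsLyndon.append_lt_swap {x y : List α} (h : IsLyndon (x ++ y)) (hx : x ≠ [])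
    (hy : y ≠ []) : x ++ y < y ++ x := by
  have := h.2 x.length (length_pos_iff.mpr hx) (by simpa using length_pos_iff.mpr hy)
  simpa [rot] using this

theorem IsLyndon.lt_of_isSuffix {w s : List α} (hw : IsLyndon w) (hs : s <:+ w) (hs0 : s ≠ [])
    (hlen : s.length < w.length) : w < s := by
  obtain ⟨p, rfl⟩ := hs
  have hp0 : p ≠ [] := by rintro rfl; simp at hlen
  have hrot : p ++ s < s ++ p := hw.append_lt_swap hp0 hs0
  by_contra hge
  have hsw : s < p ++ s := lt_of_le_of_ne (not_lt.mp hge) fun h => by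
    rw [← h] at hlen; exact lt_irrefl _ hlen
  by_cases hborder : s <+: p ++ s
  · -- `w = p ++ s = s ++ x` has the rotations `s ++ p` and `x ++ s`; comparing `x` with `p`
    -- shows that one of them is not above `w`
    obtain ⟨x, hx⟩ := hborder
    have hxp : x.length = p.length := by have := congrArg length hx; simp at this; omega
    have hx0 : x ≠ [] := ne_nil_of_length_pos (hxp ▸ length_pos_iff.mpr hp0)
    have hrot' : p ++ s < x ++ s := hx ▸ (hx ▸ hw).append_lt_swap hs0 hx0
    rcases lt_trichotomy x p with hlt | rfl | hgt
    · exact lt_asymm hrot' (append_lt_append_of_lt_of_length_le_s4 hlt hxp.ge s s)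
    · exact lt_irrefl _ (hx ▸ hrot)
    · exact lt_asymm hrot (hx ▸ append_left_lt hgt)
  · exact lt_asymm hrot (by simpa using append_lt_append_of_lt_of_not_prefix_s4 hsw hborder p [])

theorem isLyndon_of_forall_isSuffix {w : List α} (hw : w ≠ [])
    (h : ∀ s, s <:+ w → s ≠ [] → s.length < w.length → w < s) : IsLyndon w := by
  refine ⟨hw, fun i hi0 hi => Lex.append_right _ _ (h _ (drop_suffix i w) ?_ ?_)⟩
  · simpa using hi
  · simp; omega

theorem IsLyndon.append_lt_append_of_isSuffix {w s : List α} (hw : IsLyndon w) (hs : s <:+ w)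
    (hs0 : s ≠ []) (hlen : s.length < w.length) (x y : List α) : w ++ x < s ++ y :=
  append_lt_append_of_lt_of_length_le_s4 (hw.lt_of_isSuffix hs hs0 hlen) hlen.le x y

theorem IsLyndon.head_le {c y : α} {r : List α} (hw : IsLyndon (c :: r)) (hy : y ∈ r) : c ≤ y := by
  obtain ⟨r₁, r₂, rfl⟩ := append_of_mem hy
  exact head_le_of_lt (hw.lt_of_isSuffix (suffix_cons_append (a := c)) (cons_ne_nil y r₂)
    (by simp))

theorem IsLyndon.eq_nil_of_forall_le {c : α} {r : List α} (hw : IsLyndon (c :: r))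
    (hc : ∀ a, a ≤ c) : r = [] := by
  have hrep : r = replicate r.length c :=
    eq_replicate_of_mem fun y hy => le_antisymm (hc y) (hw.head_le hy)
  by_contra hr
  have hpre : r <+: c :: r := by
    rw [hrep, ← replicate_succ, replicate_succ']
    exact prefix_append _ _
  exact hpre.le (hw.lt_of_isSuffix (suffix_cons c r) hr (by simp))

theorem IsLyndon.listPow_append_of_lt {u v : List α} {a b : α} {k : ℕ}
    (hL : IsLyndon (u ++ b :: v)) (hba : b < a) (hk : 1 ≤ k) :
    IsLyndon (listPow (u ++ b :: v) k ++ u ++ [a]) := by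
  set t := u ++ b :: v
  have hba' : ∀ z z' : List α, b :: z < a :: z' := fun _ _ => cons_lt_cons_iff.mpr (Or.inl hba)
  have hanti : StrictAnti fun n => listPow t n ++ (u ++ [a]) :=
    strictAnti_listPow_append (by simpa [t] using append_left_lt (l₁ := u) (hba' _ []))
  obtain ⟨k, rfl⟩ : ∃ j, k = j + 1 := ⟨k - 1, by omega⟩
  rw [append_assoc]
  refine isLyndon_of_forall_isSuffix (by simp) fun s hs hs0 hlen => ?_
  -- proper suffixes are either `t^m u a` with `m ≤ k`, compared by `hanti`, or start with a
  -- proper suffix of `t` (or of `u`, which `t` continues by `b v`), and `t` is below those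
  rcases isSuffix_listPow_append hs with hsw | ⟨r, m, hr, hr0, hm, rfl⟩
  · obtain ⟨s', rfl, hs'⟩ := (suffix_concat_iff.mp hsw).resolve_left hs0
    rcases hs'.length_le.lt_or_eq with hlt | heq
    · rw [listPow_succ, append_assoc]
      calc t ++ (listPow t k ++ (u ++ [a])) < (s' ++ b :: v) ++ [] :=
            hL.append_lt_append_of_isSuffix (suffix_append_self_iff.mpr hs') (by simp)
              (by simpa [t] using hlt) _ _
        _ < s' ++ [a] := by simpa using append_left_lt (l₁ := s') (hba' v [])
    · rw [hs'.eq_of_length heq]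
      simpa using hanti k.succ_pos
  · rcases hr.length_le.lt_or_eq with hlt | heq
    · rw [listPow_succ, append_assoc]
      exact hL.append_lt_append_of_isSuffix hr hr0 hlt _ _
    · rw [hr.eq_of_length heq] at hlen ⊢
      have hmk : m ≠ k := by rintro rfl; simp [listPow_succ] at hlen
      simpa [listPow_succ] using hanti (show m + 1 < k + 1 by omega)

theorem inP'_replicate {c : α} {k : ℕ} (hc : ∀ a, a ≤ c) (hk : 1 ≤ k) :
    InP' (replicate k c) := by
  obtain rfl | hk2 := hk.eq_or_lt
  · exact Or.inl ⟨by simp, [], by simpa using isLyndon_singleton c⟩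
  · exact Or.inr ⟨c, k, hk2, hc, rfl⟩

theorem InP'.of_append {w x : List α} (h : InP' (w ++ x)) (hw : w ≠ []) : InP' w := by
  rcases h with ⟨-, y, hy⟩ | ⟨c, k, -, hc, hwx⟩
  · exact Or.inl ⟨hw, x ++ y, by rwa [← append_assoc]⟩
  · have hrep : w = replicate w.length c :=
      eq_replicate_of_mem fun a ha => eq_of_mem_replicate (hwx ▸ mem_append_left x ha)
    rw [hrep]
    exact inP'_replicate hc (length_pos_iff.mpr hw)

theorem not_inP'_listPow_append_of_lt {u v : List α} {a b : α} {k : ℕ} (hab : a < b)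
    (hk : 1 ≤ k) : ¬ InP' (listPow (u ++ b :: v) k ++ u ++ [a]) := by
  obtain ⟨k, rfl⟩ : ∃ j, k = j + 1 := ⟨k - 1, by omega⟩
  rintro (⟨-, s, hL⟩ | ⟨c, n, -, -, hrep⟩)
  · have hsuffix : u ++ a :: s <:+ listPow (u ++ b :: v) (k + 1) ++ u ++ [a] ++ s :=
      ⟨listPow (u ++ b :: v) (k + 1), by simp⟩
    have hgt := hL.lt_of_isSuffix hsuffix (by simp) (by simp [listPow_succ]; omega)
    refine lt_asymm hgt ?_
    simpa [listPow_succ] using append_left_lt (l₁ := u) (cons_lt_cons_iff.mpr (Or.inl hab))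
  · have hmem : ∀ x ∈ listPow (u ++ b :: v) (k + 1) ++ u ++ [a], x = c :=
      fun x hx => eq_of_mem_replicate (hrep ▸ hx)
    exact hab.ne ((hmem a (by simp)).trans (hmem b (by simp [listPow_succ])).symm)

theorem inP'_listPow_append {u v : List α} {k : ℕ} (hL : IsLyndon (u ++ v)) (hv : v ≠ [])
    (hk : 1 ≤ k) : InP' (listPow (u ++ v) k ++ u) := by
  obtain ⟨c, r, hcr⟩ := exists_cons_of_ne_nil (append_ne_nil_of_right_ne_nil u hv)
  by_cases hmax : ∀ a, a ≤ c
  · obtain rfl : r = [] := (hcr ▸ hL).eq_nil_of_forall_le hmax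
    obtain ⟨rfl, rfl⟩ : u = [] ∧ v = [c] := by simpa [hv] using append_eq_singleton_iff.mp hcr
    simpa [listPow] using inP'_replicate hmax hk
  · obtain ⟨a, hca⟩ := not_forall_not.mp (by simpa using hmax)
    have hext : IsLyndon (listPow (u ++ v) (k + 1) ++ [a]) := by
      simpa [hcr] using (show IsLyndon ([] ++ c :: r) by simpa [hcr] using hL
        ).listPow_append_of_lt hca (k := k + 1) (by omega)
    have hne : listPow (u ++ v) k ++ u ≠ [] := by
      obtain ⟨j, rfl⟩ : ∃ j, k = j + 1 := ⟨k - 1, by omega⟩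
      simp [listPow_succ, hv]
    refine Or.inl ⟨hne, v ++ [a], ?_⟩
    simpa [listPow_succ'] using hext

theorem exists_listPow_append_of_inP' {w : List α} (h : InP' w) :
    ∃ (u v : List α) (k : ℕ), v ≠ [] ∧ 1 ≤ k ∧ IsLyndon (u ++ v) ∧
      w = listPow (u ++ v) k ++ u := by
  induction w using reverseRecOn with
  | nil =>
    rcases h with ⟨h, -⟩ | ⟨c, k, hk, -, h⟩
    · exact absurd rfl h
    · simp at h; omega
  | append_singleton w a ih =>
    rcases eq_or_ne w [] with rfl | hw
    · exact ⟨[], [a], 1, by simp, le_rfl, by simpa using isLyndon_singleton a, by simp [listPow]⟩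
    obtain ⟨u, v, k, hv, hk, hL, rfl⟩ := ih (h.of_append hw)
    obtain ⟨b, v, rfl⟩ := exists_cons_of_ne_nil hv
    rcases lt_trichotomy a b with hab | rfl | hba
    · exact absurd h (not_inP'_listPow_append_of_lt hab hk)
    · rcases eq_or_ne v [] with rfl | hv
      · exact ⟨[], u ++ [a], k + 1, by simp, by omega, by simpa using hL, by simp [listPow_succ']⟩
      · exact ⟨u ++ [a], v, k, hv, hk, by simpa using hL, by simp⟩
    · exact ⟨[], listPow (u ++ b :: v) k ++ u ++ [a], 1, by simp, le_rfl,
        by simpa using hL.listPow_append_of_lt hba hk, by simp [listPow]⟩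

end Lyndon

/-- `P' = { (uv)^k u : u ∈ Σ*, v ∈ Σ⁺, k ≥ 1 and uv ∈ L }`. -/
theorem mem_P'_iff [LinearOrder α] (w : List α) :
    InP' w ↔ ∃ (u v : List α) (k : ℕ), v ≠ [] ∧ 1 ≤ k ∧ IsLyndon (u ++ v) ∧
      w = listPow (u ++ v) k ++ u := by
  refine ⟨exists_listPow_append_of_inP', ?_⟩
  rintro ⟨u, v, k, hv, hk, hL, rfl⟩
  exact inP'_listPow_append hL hv hk
end

section
/- Let w be a nonempty word and let j > 0 be a position of w such that w < suf(w,i) for every i with 0 < i ≤ j, and such that lcp(w, suf(w,j)) ≥ 1. Then w < suf(w,k) for every k with j < k ≤ j + lcp(w, suf(w,j)). -/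
variable {α : Type*}

lemma lcpLen_le_left [DecidableEq α] : ∀ u v : List α, lcpLen u v ≤ u.length := by
  intro u
  induction u with
  | nil => intro v; cases v <;> simp [lcpLen]
  | cons a u ih =>
    intro v
    cases v with
    | nil => simp [lcpLen]
    | cons b v =>
      by_cases h : a = b <;> simp [lcpLen, h]
      exact ih v

lemma lcpLen_le_right [DecidableEq α] : ∀ u v : List α, lcpLen u v ≤ v.length := by
  intro u
  induction u with
  | nil => intro v; cases v <;> simp [lcpLen]
  | cons a u ih =>
    intro v
    cases v with
    | nil => simp [lcpLen]
    | cons b v =>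
      by_cases h : a = b <;> simp [lcpLen, h]
      exact ih v

lemma take_lcpLen_eq [DecidableEq α] : ∀ u v : List α, u.take (lcpLen u v) = v.take (lcpLen u v) := by
  intro u
  induction u with
  | nil => intro v; cases v <;> simp [lcpLen]
  | cons a u ih =>
    intro v
    cases v with
    | nil => simp [lcpLen]
    | cons b v =>
      by_cases h : a = b <;> simp [lcpLen, h]
      exact ih v

lemma getElem_lcpLen_ne [DecidableEq α] : ∀ (u v : List α) (hu : lcpLen u v < u.length)
    (hv : lcpLen u v < v.length), u[lcpLen u v] ≠ v[lcpLen u v] := by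
  intro u
  induction u with
  | nil => intro v hu; simp at hu
  | cons a u ih =>
    intro v hu hv
    cases v with
    | nil => simp at hv
    | cons b v =>
      by_cases h : a = b
      · simp only [lcpLen, if_pos h, List.length_cons] at hu hv
        simpa [lcpLen, if_pos h, List.getElem_cons_succ] using ih v (by omega) (by omega)
      · simpa [lcpLen, h] using h

lemma append_cons_lt_append_cons [LinearOrder α] {a b : α} (c s t : List α) (h : a < b) :
    c ++ a :: s < c ++ b :: t :=
  List.Lex.append_left (· < ·) (List.Lex.rel h) c

lemma not_append_lt_self [LinearOrder α] : ∀ (u t : List α), ¬ (u ++ t < u) := by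
  intro u
  induction u with
  | nil => intro t h; exact (by exact nomatch (h : List.Lex (· < ·) t []))
  | cons a u ih =>
    intro t h
    have h' : List.Lex (· < ·) (a :: (u ++ t)) (a :: u) := h
    cases h' with
    | cons h'' => exact ih t h''
    | rel h'' => exact lt_irrefl a h''


/-- If `w < suf(w,i)` for all `0 < i ≤ j` and `lcp(w, suf(w,j)) ≥ 1`, then
`w < suf(w,k)` for all `j < k ≤ j + lcp(w, suf(w,j))`. -/
theorem lt_suffix_skip [LinearOrder α] (w : List α) (hw : w ≠ [])
    (j : ℕ) (hj : 0 < j) (hjlt : j < w.length)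
    (h1 : ∀ i, 0 < i → i ≤ j → w < w.drop i)
    (h2 : 1 ≤ lcpLen w (w.drop j)) :
    ∀ k, j < k → k ≤ j + lcpLen w (w.drop j) → w < w.drop k := by
  classical
  set p := lcpLen w (w.drop j) with hp
  have hple : p ≤ w.length - j := by simpa using lcpLen_le_right w (w.drop j)
  have htake : w.take p = (w.drop j).take p := take_lcpLen_eq w (w.drop j)
  have hwj : w < w.drop j := h1 j hj le_rfl
  have hplt : j + p < w.length := by
    rcases lt_or_eq_of_le hple with h | h
    · omega
    · exfalso
      have hpref : w.drop j <+: w := by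
        have h3 : (w.drop j).take p = w.drop j := List.take_of_length_le (by simp; omega)
        rw [← h3, ← htake]
        exact List.take_prefix _ _
      obtain ⟨t, ht⟩ := hpref
      exact not_append_lt_self (w.drop j) t (by rw [ht]; exact hwj)
  have hplen : p < w.length := by omega
  have hpd : p < (w.drop j).length := by simp; omega
  have hgetdrop : (w.drop j)[p]'hpd = w[j+p] := by
    simp [List.getElem_drop]
  have hne : w[p] ≠ w[j+p] := by
    have h4 := getElem_lcpLen_ne w (w.drop j) hplen hpd
    rwa [hgetdrop] at h4
  have ew : w = w.take p ++ (w[p] :: w.drop (p+1)) := by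
    conv_lhs => rw [← List.take_append_drop p w, List.drop_eq_getElem_cons hplen]
  have edj : w.drop j = w.take p ++ (w[j+p] :: w.drop (j+p+1)) := by
    conv_lhs => rw [← List.take_append_drop p (w.drop j)]
    rw [← htake, List.drop_drop, List.drop_eq_getElem_cons hplt]
  have hlt : w[p] < w[j+p] := by
    rcases lt_or_gt_of_ne hne with h | h
    · exact h
    · exfalso
      have : w.drop j < w := by
        conv_lhs => rw [edj]
        conv_rhs => rw [ew]
        exact append_cons_lt_append_cons _ _ _ h
      exact lt_asymm hwj this
  intro k
  induction k using Nat.strong_induction_on with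
  | _ k IH =>
    intro hk1 hk2
    obtain ⟨m, rfl⟩ : ∃ m, k = j + m := ⟨k - j, by omega⟩
    have hm0 : 0 < m := by omega
    have hmp : m ≤ p := by omega
    have hwm : w < w.drop m := by
      rcases le_or_gt m j with h | h
      · exact h1 m hm0 h
      · exact IH m (by omega) h (by omega)
    have hdm : w.drop m = (w.take p).drop m ++ (w[p] :: w.drop (p+1)) := by
      conv_lhs => rw [← List.take_append_drop p w]
      rw [List.drop_append, List.length_take]
      have h0 : m - min p w.length = 0 := by omega
      rw [h0, List.drop_zero, List.drop_eq_getElem_cons hplen]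
    have hdk : w.drop (j+m) = (w.take p).drop m ++ (w[j+p] :: w.drop (j+p+1)) := by
      have h0 : w.drop (j+m) = (w.drop j).drop m := by
        rw [List.drop_drop]
      rw [h0]
      conv_lhs => rw [← List.take_append_drop p (w.drop j)]
      rw [List.drop_append, List.length_take, ← htake]
      have h5 : m - min p (w.drop j).length = 0 := by omega
      rw [h5, List.drop_zero, List.drop_drop, List.drop_eq_getElem_cons hplt]
    calc w < w.drop m := hwm
      _ < w.drop (j+m) := by
        rw [hdm, hdk]
        exact append_cons_lt_append_cons _ _ _ hlt
end

section
/- Let c̄ be the smallest symbol of Σ and let w be a word such that the two-symbol word c̄c̄ occurs in w as a substring; let s = min Occ_{{c̄c̄}}(w) be the smallest starting position of an occurrence of c̄c̄ in w. Then CFL(w) is the concatenation of CFL(w[0..s-1]) and CFL(w[s..|w|-1]). -/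
variable {α : Type*}

/-!
The first factor of `CFL(w[s..])` begins with `c̄c̄` (or is `c̄`), so it suffices that the last
factor `x` of `CFL(w[0..s-1])` is larger. Since `c̄` is the least symbol, this can only fail if `x`
begins with `c̄c̄` or `x = c̄`; either way, as `w[s..]` begins with `c̄`, the word `w` would contain
`c̄c̄` at the position where `x` starts, which lies before `s`.
-/

theorem List.prefix_flatten_of_mem_head? {g : List (List α)} {y : List α} (hy : y ∈ g.head?) :
    y <+: g.flatten := by
  obtain ⟨g', rfl⟩ := List.head?_eq_some_iff.1 hy
  exact ⟨g'.flatten, by simp⟩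

theorem List.suffix_flatten_of_mem_getLast? {f : List (List α)} {x : List α}
    (hx : x ∈ f.getLast?) : x <:+ f.flatten := by
  obtain ⟨f', rfl⟩ := List.getLast?_eq_some_iff.1 hx
  exact ⟨f'.flatten, by simp⟩

theorem exists_drop_eq_append_drop_of_suffix_take {w x : List α} {s : ℕ} (hx : x <:+ w.take s) :
    ∃ t, t + x.length ≤ s ∧ w.drop t = x ++ w.drop s := by
  obtain ⟨p, hp⟩ := hx
  refine ⟨p.length, ?_, ?_⟩
  · have := congrArg List.length hp
    simp only [List.length_append, List.length_take] at this
    omega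
  · calc w.drop p.length = (p ++ (x ++ w.drop s)).drop p.length := by
          rw [← List.append_assoc, hp, List.take_append_drop]
      _ = x ++ w.drop s := List.drop_left

section
variable [LinearOrder α]

theorem IsCFL.append {u v : List α} {f g : List (List α)} (hf : IsCFL u f) (hg : IsCFL v g)
    (hfg : ∀ x ∈ f.getLast?, ∀ y ∈ g.head?, y ≤ x) : IsCFL (u ++ v) (f ++ g) := by
  obtain ⟨hf_flat, hf_lyndon, hf_chain⟩ := hf
  obtain ⟨hg_flat, hg_lyndon, hg_chain⟩ := hg
  refine ⟨by rw [List.flatten_append, hf_flat, hg_flat], ?_, hf_chain.append hg_chain hfg⟩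
  intro x hx
  exact (List.mem_append.1 hx).elim (hf_lyndon x) (hg_lyndon x)

-- `¬ [c, c] <+: x ++ [c]` says that `x` neither begins with `cc` nor equals `c`.
theorem square_append_lt_of_not_prefix {c : α} (hc : ∀ a : α, c ≤ a) {x : List α} (hx : x ≠ [])
    (hxc : ¬ [c, c] <+: x ++ [c]) (t : List α) : [c, c] ++ t < x := by
  obtain ⟨a, x, rfl⟩ := List.exists_cons_of_ne_nil hx
  rcases (hc a).lt_or_eq with hca | rfl
  · exact List.Lex.rel hca
  obtain ⟨b, x, rfl⟩ : ∃ b x', x = b :: x' := by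
    cases x with
    | nil => exact absurd ⟨[], rfl⟩ hxc
    | cons b x' => exact ⟨b, x', rfl⟩
  rcases (hc b).lt_or_eq with hcb | rfl
  · exact List.Lex.cons (List.Lex.rel hcb)
  · exact absurd ⟨x ++ [c], by simp⟩ hxc

end

/-- If `c̄c̄` occurs in `w` (with `c̄` the smallest symbol) and `s` is the smallest
starting position of an occurrence, then `CFL(w) = CFL(w[0..s-1]) CFL(w[s..|w|-1])`. -/
theorem cfl_split_at_smallest_square [LinearOrder α] (cbar : α)
    (hcbar : ∀ a : α, cbar ≤ a) (w : List α)
    (s : ℕ) (hocc : [cbar, cbar] <+: w.drop s)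
    (hmin : ∀ t : ℕ, [cbar, cbar] <+: w.drop t → s ≤ t)
    (f g : List (List α)) (hf : IsCFL (w.take s) f) (hg : IsCFL (w.drop s) g) :
    IsCFL w (f ++ g) := by
  rw [← List.take_append_drop s w]
  refine hf.append hg fun x hx y hy => ?_
  have hx_ne : x ≠ [] := (hf.2.1 x (List.mem_of_mem_getLast? hx)).1
  obtain ⟨t, hts, hdrop⟩ :=
    exists_drop_eq_append_drop_of_suffix_take (hf.1 ▸ List.suffix_flatten_of_mem_getLast? hx)
  have hx_sq : ¬ [cbar, cbar] <+: x ++ [cbar] := fun hsq => by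
    have hc : [cbar] <+: w.drop s := (List.prefix_append [cbar] [cbar]).trans hocc
    have := hmin t (hdrop ▸ hsq.trans ((List.prefix_append_right_inj x).2 hc))
    have := List.length_pos_of_ne_nil hx_ne
    omega
  obtain ⟨r, hr⟩ := hocc
  have hy_pre : y <+: [cbar, cbar] ++ r := hr ▸ hg.1 ▸ List.prefix_flatten_of_mem_head? hy
  -- `List.IsPrefix.le` is stated for core's `≤` on lists, which unfolds to `¬ b < a`.
  exact (not_lt.1 hy_pre.le).trans (square_append_lt_of_not_prefix hcbar hx_ne hx_sq r).le
end

section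
/- Let w be a nonempty word over Σ with Lyndon factorization w₁, w₂, …, w_m and run-length encoding of length ρ. Then for any 1 ≤ i ≤ ρ, either there exists a factor w_j such that the interval [a_i^{rle}, b_i^{rle}] is contained in [a_j, b_j], or there exist l_i consecutive factors w_j, w_{j+1}, …, w_{j+l_i-1} such that |w_{j+t}| = 1 and a_{j+t} ∈ [a_i^{rle}, b_i^{rle}] for all 0 ≤ t < l_i. -/
/-! A factor boundary strictly inside a run of `c` separates a Lyndon factor ending in `c` from a
smaller-or-equal factor beginning with `c`. A Lyndon word begins with its least letter and, having
no border, cannot begin and end with the same letter unless it is a single letter; so the factor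
before the boundary is `[c]`, and it starts exactly at the run. Every later factor inside the run
begins with `c` and is at most `[c]`, hence is `[c]` as well. -/

variable {α : Type*}

/-- Starting position `a_j` (0-indexed `j`) of the `j`-th factor of a factorization `f`. -/
def factStart (f : List (List α)) (j : ℕ) : ℕ := ((f.take j).map List.length).sum

/-- Starting position `a_i^{rle}` (0-indexed `i`) of the `i`-th run of an RLE sequence `R`. -/
def rleStart (R : List (α × ℕ)) (i : ℕ) : ℕ := ((R.take i).map Prod.snd).sum

/-- The word encoded by an RLE sequence. -/
def rleWord (R : List (α × ℕ)) : List α :=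
  (R.map (fun p => List.replicate p.2 p.1)).flatten

theorem List.append_lt_append_of_lt_of_length_eq_s15 [LT α] {x y : List α} (h : x < y)
    (hl : x.length = y.length) (s t : List α) : x ++ s < y ++ t := by
  induction x generalizing y with
  | nil => cases y with
    | nil => cases h
    | cons => simp at hl
  | cons a x ih =>
    obtain _ | ⟨b, y⟩ := y
    · simp at hl
    rcases List.cons_lt_cons_iff.mp h with hab | ⟨rfl, hxy⟩
    · exact List.cons_lt_cons_iff.mpr (Or.inl hab)
    · exact List.cons_lt_cons_iff.mpr (Or.inr ⟨rfl, ih hxy (by simpa using hl)⟩)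

theorem List.eq_singleton_of_le_singleton [LinearOrder α] {c : α} {z : List α}
    (h : c :: z ≤ [c]) : c :: z = [c] := by
  obtain _ | ⟨d, z⟩ := z
  · rfl
  exact absurd h (not_le.mpr (List.cons_lt_cons_iff.mpr (Or.inr ⟨rfl, List.nil_lt_cons d z⟩)))

section Lyndon

variable [LinearOrder α]

theorem IsLyndon.head_le_of_mem {b c : α} {x : List α} (hu : IsLyndon (b :: x))
    (hc : c ∈ b :: x) : b ≤ c := by
  obtain ⟨k, hk, rfl⟩ := List.mem_iff_getElem.mp hc
  rcases Nat.eq_zero_or_pos k with rfl | hk0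
  · exact le_rfl
  have hrot := hu.2 k hk0 hk
  rw [rot, List.drop_eq_getElem_cons hk, List.cons_append] at hrot
  rcases List.cons_lt_cons_iff.mp hrot with h | ⟨h, -⟩
  exacts [h.le, h.le]

theorem IsLyndon.eq_nil_of_eq_append_singleton {a : α} {x y : List α}
    (hu : IsLyndon (a :: x)) (hxy : a :: x = y ++ [a]) : x = [] := by
  by_contra hx
  have hlen : x.length = y.length := by simpa using congrArg List.length hxy
  have hy : 0 < y.length := by rw [← hlen]; exact List.length_pos_iff.mpr hx
  have hrot₁ : y ++ [a] < x ++ [a] := by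
    simpa [rot, ← hxy] using hu.2 1 (by omega) (by simp; omega)
  have hrot₂ : x < y := by
    have h := hu.2 y.length hy (by simp; omega)
    rw [hxy, rot, List.drop_left, List.take_left, ← hxy] at h
    simpa [List.cons_lt_cons_iff] using h
  exact lt_asymm hrot₁ (List.append_lt_append_of_lt_of_length_eq_s15 hrot₂ hlen _ _)

theorem IsLyndon.eq_singleton_of_le {u v : List α} {c : α} (hu : IsLyndon u) (hvu : v ≤ u)
    (hu_last : u.getLast? = some c) (hv_head : v.head? = some c) : u = [c] := by
  obtain ⟨y, rfl⟩ := List.getLast?_eq_some_iff.mp hu_last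
  obtain ⟨z, rfl⟩ := List.head?_eq_some_iff.mp hv_head
  obtain _ | ⟨b, y⟩ := y
  · rfl
  have hbc : b ≤ c := hu.head_le_of_mem (by simp)
  have hcb : c ≤ b := le_of_not_gt fun hcb =>
    not_lt.mpr hvu (List.cons_lt_cons_iff.mpr (Or.inl hcb))
  obtain rfl := le_antisymm hbc hcb
  simpa using hu.eq_nil_of_eq_append_singleton (x := y ++ [b]) (y := b :: y) rfl

end Lyndon

section FactStart

variable (f : List (List α))

theorem factStart_eq_length_flatten_take (j : ℕ) : factStart f j = (f.take j).flatten.length := by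
  rw [factStart, List.length_flatten, List.map_take]

theorem factStart_succ {j : ℕ} (hj : j < f.length) :
    factStart f (j + 1) = factStart f j + f[j].length := by
  simp only [factStart, List.take_add_one, List.getElem?_eq_getElem hj, Option.toList_some,
    List.map_append, List.sum_append, List.map_cons, List.map_nil, List.sum_cons, List.sum_nil,
    Nat.add_zero]

theorem factStart_of_length_le {j : ℕ} (hj : f.length ≤ j) :
    factStart f j = f.flatten.length := by
  rw [factStart_eq_length_flatten_take, List.take_of_length_le hj]

theorem lt_length_of_factStart_lt {j : ℕ} (h : factStart f j < f.flatten.length) :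
    j < f.length := by
  by_contra hj
  rw [factStart_of_length_le f (not_lt.mp hj)] at h
  exact lt_irrefl _ h

theorem getElem?_flatten_factStart_add {j r : ℕ} (hj : j < f.length) (hr : r < f[j].length) :
    f.flatten[factStart f j + r]? = f[j][r]? := by
  have hsplit : f.flatten = (f.take j).flatten ++ (f[j] ++ (f.drop (j + 1)).flatten) := by
    rw [← List.flatten_cons, ← List.drop_eq_getElem_cons hj, ← List.flatten_append,
      List.take_append_drop]
  rw [hsplit, factStart_eq_length_flatten_take,
    List.getElem?_append_right (by omega), Nat.add_sub_cancel_left,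
    List.getElem?_append_left hr]

theorem exists_factStart_le_lt {p : ℕ} (hp : p < f.flatten.length) :
    ∃ j, ∃ hj : j < f.length, factStart f j ≤ p ∧ p < factStart f j + f[j].length := by
  induction f generalizing p with
  | nil => simp at hp
  | cons u f ih =>
    by_cases hpu : p < u.length
    · exact ⟨0, by simp, by simp [factStart], by simpa [factStart] using hpu⟩
    rw [List.flatten_cons, List.length_append] at hp
    obtain ⟨j, hj, h₁, h₂⟩ := ih (p := p - u.length) (by omega)
    have hcons : factStart (u :: f) (j + 1) = u.length + factStart f j := by
      simp [factStart]
    exact ⟨j + 1, by simpa using hj, by omega, by simp only [hcons, List.getElem_cons_succ]; omega⟩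

end FactStart

theorem getElem?_rleWord {R : List (α × ℕ)} {i t : ℕ} (hi : i < R.length) (ht : t < R[i].2) :
    (rleWord R)[rleStart R i + t]? = some R[i].1 := by
  set F := R.map fun p => List.replicate p.2 p.1
  have hstart : rleStart R i = factStart F i := by
    simp [rleStart, factStart, F, ← List.map_take, Function.comp_def]
  have hiF : i < F.length := by simpa [F] using hi
  have htF : t < F[i].length := by simpa [F] using ht
  rw [rleWord, hstart, getElem?_flatten_factStart_add F hiF htF]
  simp [F, ht]

section Runs

variable [LinearOrder α] {f : List (List α)} {c : α} {A l : ℕ}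

theorem singleton_factors_of_run (hne : ∀ x ∈ f, x ≠ []) (hchain : f.IsChain (· ≥ ·))
    (hrun : ∀ t < l, f.flatten[A + t]? = some c) {k : ℕ} (hk : k < f.length)
    (hfk : f[k] = [c]) (hA : factStart f k = A) :
    ∀ t < l, ∃ h : k + t < f.length, f[k + t] = [c] ∧ factStart f (k + t) = A + t := by
  intro t
  induction t with
  | zero => exact fun _ => ⟨hk, hfk, hA⟩
  | succ t ih =>
    intro ht
    obtain ⟨hkt, hfkt, hAt⟩ := ih (by omega)
    have hstart : factStart f (k + t + 1) = A + (t + 1) := by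
      rw [factStart_succ f hkt, hfkt, hAt, List.length_singleton, Nat.add_assoc]
    have hkt₁ : k + t + 1 < f.length := by
      apply lt_length_of_factStart_lt
      rw [hstart]
      exact (List.getElem?_eq_some_iff.mp (hrun _ ht)).1
    have hhead : f[k + t + 1].head? = some c := by
      have hpos := List.length_pos_iff.mpr (hne _ (List.getElem_mem hkt₁))
      rw [List.head?_eq_getElem?, ← getElem?_flatten_factStart_add f hkt₁ hpos, Nat.add_zero,
        hstart, hrun _ ht]
    obtain ⟨z, hz⟩ := List.head?_eq_some_iff.mp hhead
    have hle : f[k + t + 1] ≤ [c] := hfkt ▸ List.isChain_iff_getElem.mp hchain _ hkt₁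
    rw [hz] at hle
    exact ⟨hkt₁, hz.trans (List.eq_singleton_of_le_singleton hle), hstart⟩

theorem run_subset_factor_or_singleton_factors (hlyn : ∀ x ∈ f, IsLyndon x)
    (hchain : f.IsChain (· ≥ ·)) (hl : 0 < l) (hrun : ∀ t < l, f.flatten[A + t]? = some c) :
    (∃ j, ∃ hj : j < f.length, factStart f j ≤ A ∧ A + l ≤ factStart f j + f[j].length) ∨
      ∃ k, ∀ t < l, ∃ h : k + t < f.length, f[k + t] = [c] ∧ factStart f (k + t) = A + t := by
  have hrun' : ∀ p, A ≤ p → p < A + l → f.flatten[p]? = some c := fun p h₁ h₂ => by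
    simpa [Nat.add_sub_cancel' h₁] using hrun (p - A) (by omega)
  obtain ⟨j, hj, hjA, hAj⟩ := exists_factStart_le_lt f
    (List.getElem?_eq_some_iff.mp (hrun' A le_rfl (by omega))).1
  by_cases hcover : A + l ≤ factStart f j + f[j].length
  · exact Or.inl ⟨j, hj, hjA, hcover⟩
  right
  have hlen := List.length_pos_iff.mpr (hlyn _ (List.getElem_mem hj)).1
  have hnext := factStart_succ f hj
  have hj₁ : j + 1 < f.length := by
    apply lt_length_of_factStart_lt
    exact (List.getElem?_eq_some_iff.mp (hrun' _ (by omega) (by omega))).1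
  have hlast : f[j].getLast? = some c := by
    rw [List.getLast?_eq_getElem?, ← getElem?_flatten_factStart_add f hj (by omega)]
    exact hrun' _ (by omega) (by omega)
  have hhead : f[j + 1].head? = some c := by
    have hpos := List.length_pos_iff.mpr (hlyn _ (List.getElem_mem hj₁)).1
    rw [List.head?_eq_getElem?, ← getElem?_flatten_factStart_add f hj₁ hpos, Nat.add_zero]
    exact hrun' _ (by omega) (by omega)
  have hfj : f[j] = [c] := (hlyn _ (List.getElem_mem hj)).eq_singleton_of_le
    (List.isChain_iff_getElem.mp hchain j hj₁) hlast hhead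
  have hjA' : factStart f j = A := by
    rw [hfj, List.length_singleton] at hAj
    omega
  exact ⟨j, singleton_factors_of_run (fun x hx => (hlyn x hx).1) hchain hrun hj hfj hjA'⟩

end Runs

theorem rle_run_contained_or_units_general [LinearOrder α] (w : List α)
    (f : List (List α)) (hf : IsCFL w f)
    (R : List (α × ℕ)) (hRw : rleWord R = w)
    (i : ℕ) (hi : i < R.length) :
    (∃ j : ℕ, ∃ hj : j < f.length,
        factStart f j ≤ rleStart R i ∧
        rleStart R i + (R.get ⟨i, hi⟩).2 - 1 ≤ factStart f j + (f.get ⟨j, hj⟩).length - 1) ∨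
    (∃ j : ℕ, ∀ t : ℕ, t < (R.get ⟨i, hi⟩).2 → ∃ hjt : j + t < f.length,
        (f.get ⟨j + t, hjt⟩).length = 1 ∧
        rleStart R i ≤ factStart f (j + t) ∧
        factStart f (j + t) ≤ rleStart R i + (R.get ⟨i, hi⟩).2 - 1) := by
  obtain ⟨rfl, hlyn, hchain⟩ := hf
  simp only [List.get_eq_getElem]
  rcases Nat.eq_zero_or_pos R[i].2 with hl | hl
  · exact Or.inr ⟨0, fun t ht => absurd ht (by omega)⟩
  have hrun (t : ℕ) (ht : t < R[i].2) : f.flatten[rleStart R i + t]? = some R[i].1 :=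
    hRw ▸ getElem?_rleWord hi ht
  rcases run_subset_factor_or_singleton_factors hlyn hchain hl hrun with
    ⟨j, hj, hstart, hend⟩ | ⟨k, hunits⟩
  · exact Or.inl ⟨j, hj, hstart, by omega⟩
  · refine Or.inr ⟨k, fun t ht => ?_⟩
    obtain ⟨hkt, hsingle, hstart⟩ := hunits t ht
    exact ⟨hkt, by rw [hsingle, List.length_singleton], by omega, by omega⟩

/-- Each run of the RLE is either contained in one Lyndon factor, or corresponds
to `l_i` consecutive unit-length factors starting inside it. -/
theorem rle_run_contained_or_units [LinearOrder α] (w : List α) (hw : w ≠ [])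
    (f : List (List α)) (hf : IsCFL w f)
    (R : List (α × ℕ)) (hR1 : ∀ p ∈ R, 1 ≤ p.2)
    (hR2 : R.Chain' (fun p q => p.1 ≠ q.1)) (hRw : rleWord R = w)
    (i : ℕ) (hi : i < R.length) :
    (∃ j : ℕ, ∃ hj : j < f.length,
        factStart f j ≤ rleStart R i ∧
        rleStart R i + (R.get ⟨i, hi⟩).2 - 1 ≤ factStart f j + (f.get ⟨j, hj⟩).length - 1) ∨
    (∃ j : ℕ, ∀ t : ℕ, t < (R.get ⟨i, hi⟩).2 → ∃ hjt : j + t < f.length,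
        (f.get ⟨j + t, hjt⟩).length = 1 ∧
        rleStart R i ≤ factStart f (j + t) ∧
        factStart f (j + t) ≤ rleStart R i + (R.get ⟨i, hi⟩).2 - 1) :=
  rle_run_contained_or_units_general w f hf R hRw i hi
end

section
/- Under the run invariant, if c_j < c_s then c_k^{l_k} ⋯ c_{j-1}^{l_{j-1}} c_j^{l_j} ∉ P'. -/
variable {α : Type*}

/-- The number of runs in the run-length encoding of a word: the length of the
list obtained by collapsing consecutive equal symbols. -/
def numRuns [DecidableEq α] (w : List α) : ℕ := (w.destutter (· ≠ ·)).length

/-- An LR word: either a Lyndon word or a power `a^k` (`k ≥ 2`) of a single symbol. -/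
def IsLR [LinearOrder α] (w : List α) : Prop :=
  IsLyndon w ∨ ∃ (a : α) (k : ℕ), 2 ≤ k ∧ w = List.replicate k a

/-- The word `c_k^{l_k} c_{k+1}^{l_{k+1}} ⋯ c_{j-1}^{l_{j-1}}` determined by the
runs `(c_t, l_t)` for `k ≤ t < j`. -/
def runWord (c : ℕ → α) (l : ℕ → ℕ) (k j : ℕ) : List α :=
  ((List.range (j - k)).map (fun t => List.replicate (l (k + t)) (c (k + t)))).flatten

/-!
Write a nonempty longest border `b` of `w'` as `c_k^{l_k} ⋯ c_{q-1}^{l_{q-1}} c_q^m`, `0 < m ≤ l_q`.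
As `b` is also a suffix of `w'`, its last run sits inside the last run of `w'`, and is all of it
when `b` has at least two runs; when `b` has a single run, maximality forbids `c_k^{m+1}` from
being a border. Either way `m = min l_q l_{j-1}`, which makes `s` the index of the run holding
the letter of `w'` right after the prefix `b`: `b c_s` is a prefix of `w'`. Then `b c_j` occurs in
`w = w' c_j^{l_j}` at a positive position with `c_j < c_s`, so rotating any extension of `w` to
that position gives a smaller word, and `w` is not a power of one letter.
-/

open List

section Words

lemma prefix_or_eq_append_of_prefix_append {b X Y : List α} (h : b <+: X ++ Y) :
    b <+: X ∨ ∃ t, t ≠ [] ∧ t <+: Y ∧ b = X ++ t := by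
  rcases prefix_or_prefix_of_prefix h (prefix_append X Y) with hbX | ⟨t, rfl⟩
  · exact Or.inl hbX
  · rcases eq_or_ne t [] with rfl | ht
    · exact Or.inl (by simp)
    · exact Or.inr ⟨t, ht, (prefix_append_right_inj X).1 h, rfl⟩

lemma replicate_append_prefix_replicate_append {a : α} {m n : ℕ} {L M : List α}
    (hL : L.head? ≠ some a) (hM : M.head? ≠ some a)
    (h : replicate m a ++ L <+: replicate n a ++ M) : m ≤ n ∧ (L ≠ [] → m = n) := by
  induction m generalizing n with
  | zero =>
    refine ⟨n.zero_le, fun hne => ?_⟩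
    obtain _ | n := n
    · rfl
    obtain ⟨x, L, rfl⟩ := exists_cons_of_ne_nil hne
    simp_all [replicate_succ]
  | succ m ih =>
    obtain _ | n := n
    · obtain ⟨r, rfl⟩ := h
      simp [replicate_succ] at hM
    · simp only [replicate_succ, cons_append, cons_prefix_cons, true_and] at h
      simpa using ih h

lemma append_replicate_suffix_append_replicate {a d : α} {m n : ℕ} {P X : List α}
    (hm : 0 < m) (hn : 0 < n) (hP : P.getLast? ≠ some a) (hX : X.getLast? ≠ some d)
    (h : P ++ replicate m a <:+ X ++ replicate n d) :
    a = d ∧ m ≤ n ∧ (P ≠ [] → m = n) := by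
  rw [← reverse_prefix, reverse_append, reverse_append, reverse_replicate,
    reverse_replicate] at h
  obtain ⟨m, rfl⟩ := Nat.exists_eq_add_one_of_ne_zero hm.ne'
  obtain ⟨n, rfl⟩ := Nat.exists_eq_add_one_of_ne_zero hn.ne'
  obtain rfl : a = d := by
    simp only [replicate_succ, cons_append, cons_prefix_cons] at h
    exact h.1
  simpa [← replicate_succ] using
    replicate_append_prefix_replicate_append (by simpa using hP) (by simpa using hX) h

lemma numRuns_replicate_append [DecidableEq α] {a : α} {n : ℕ} {L : List α} (hn : 0 < n)
    (hL : L.head? ≠ some a) : numRuns (replicate n a ++ L) = numRuns L + 1 := by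
  obtain ⟨n, rfl⟩ := Nat.exists_eq_add_one_of_ne_zero hn.ne'
  have hskip :
      ∀ n : ℕ, destutter' (· ≠ ·) a (replicate n a ++ L) = destutter' (· ≠ ·) a L := by
    intro n
    induction n with
    | zero => rfl
    | succ n ih => simpa [replicate_succ, destutter'_cons] using ih
  rw [replicate_succ, cons_append, numRuns, destutter_cons', hskip]
  cases L with
  | nil => rfl
  | cons x L =>
    have hx : a ≠ x := fun h => hL (by simp [h])
    simp [numRuns, destutter'_cons_pos _ hx, destutter_cons']

lemma not_inP'_of_lt [LinearOrder α] {w x u y : List α} {d e : α} (hx : x ≠ [])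
    (hw : w = x ++ u ++ e :: y) (hpre : u ++ [d] <+: w) (hed : e < d) : ¬ InP' w := by
  rintro (⟨-, v, -, hmin⟩ | ⟨a, n, -, -, rfl⟩)
  · obtain ⟨r, hr⟩ := hpre
    have hrot : rot (w ++ v) x.length = u ++ e :: (y ++ v ++ x) := by simp [rot, hw]
    have hlt : rot (w ++ v) x.length < w ++ v := by
      rw [hrot, ← hr]
      simpa using append_left_lt (l₁ := u) (cons_lt_cons_iff.2 (Or.inl hed))
    exact List.lt_asymm hlt (hmin x.length (length_pos_iff.2 hx) (by simp [hw]))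
  · have he : e ∈ replicate n a := hw ▸ by simp
    have hd : d ∈ replicate n a := hpre.subset (by simp)
    rw [eq_of_mem_replicate he, eq_of_mem_replicate hd] at hed
    exact lt_irrefl a hed

lemma not_inP'_append_replicate_of_lt [LinearOrder α] {b w : List α} {d e : α} {n : ℕ}
    (hsuf : b <:+ w) (hlen : b.length < w.length) (hpre : b ++ [d] <+: w ++ replicate n e)
    (hn : 0 < n) (hed : e < d) : ¬ InP' (w ++ replicate n e) := by
  obtain ⟨x, rfl⟩ := hsuf
  obtain ⟨n, rfl⟩ := Nat.exists_eq_add_one_of_ne_zero hn.ne'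
  refine not_inP'_of_lt (x := x) (y := replicate n e) ?_ (by simp [replicate_succ]) hpre hed
  rintro rfl
  simp at hlen

end Words

structure IsRunSeq (c : ℕ → α) (l : ℕ → ℕ) (k j : ℕ) : Prop where
  pos : ∀ t, k ≤ t → t < j → 0 < l t
  ne : ∀ t, k ≤ t → t + 1 < j → c t ≠ c (t + 1)

namespace IsRunSeq

variable {c : ℕ → α} {l : ℕ → ℕ} {k j : ℕ}

lemma mono (h : IsRunSeq c l k j) {j' : ℕ} (hj : j' ≤ j) : IsRunSeq c l k j' :=
  ⟨fun t h1 h2 => h.pos t h1 (by omega), fun t h1 h2 => h.ne t h1 (by omega)⟩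

lemma tail (h : IsRunSeq c l k j) : IsRunSeq c l (k + 1) j :=
  ⟨fun t h1 h2 => h.pos t (by omega) h2, fun t h1 h2 => h.ne t (by omega) h2⟩

end IsRunSeq

section RunWord

variable (c : ℕ → α) (l : ℕ → ℕ) {k q j : ℕ}

@[simp] lemma runWord_self (k : ℕ) : runWord c l k k = [] := by
  simp [runWord]

lemma runWord_succ (h : k ≤ j) :
    runWord c l k (j + 1) = runWord c l k j ++ replicate (l j) (c j) := by
  simp [runWord, Nat.succ_sub h, range_succ, Nat.add_sub_cancel' h]

lemma runWord_append (hkq : k ≤ q) (hqj : q ≤ j) :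
    runWord c l k j = runWord c l k q ++ runWord c l q j := by
  induction j, hqj using Nat.le_induction with
  | base => simp
  | succ j hqj ih => rw [runWord_succ c l (hkq.trans hqj), runWord_succ c l hqj, ih, append_assoc]

lemma runWord_cons (h : k < j) :
    runWord c l k j = replicate (l k) (c k) ++ runWord c l (k + 1) j := by
  rw [runWord_append c l k.le_succ h, runWord_succ c l le_rfl, runWord_self, nil_append]

variable {c l}

lemma runWord_ne_nil (h : IsRunSeq c l k j) (hkj : k < j) : runWord c l k j ≠ [] := by
  simp [runWord_cons c l hkj, (h.pos k le_rfl hkj).ne']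

lemma getLast?_runWord_ne (h : IsRunSeq c l k (q + 1)) (hkq : k ≤ q) :
    (runWord c l k q).getLast? ≠ some (c q) := by
  rcases hkq.eq_or_lt with rfl | hkq
  · simp
  obtain ⟨p, rfl⟩ := Nat.exists_eq_add_of_lt hkq
  simp [runWord_succ c l (Nat.le_add_right k p), getLast?_replicate,
    (h.pos (k + p) (by omega) (by omega)).ne', h.ne (k + p) (by omega) (by omega)]

lemma head?_runWord_append_replicate (h : IsRunSeq c l k q) (hkq : k ≤ q) {m : ℕ} (hm : 0 < m) :
    (runWord c l k q ++ replicate m (c q)).head? = some (c k) := by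
  rcases hkq.eq_or_lt with rfl | hkq
  · simp [head?_replicate, hm.ne']
  · simp [runWord_cons c l hkq, head?_replicate, (h.pos k le_rfl hkq).ne']

lemma runWord_append_replicate_prefix (hkq : k ≤ q) (hqj : q < j) {m : ℕ} (hm : m ≤ l q) :
    runWord c l k q ++ replicate m (c q) <+: runWord c l k j := by
  rw [runWord_append c l hkq hqj.le, runWord_cons c l hqj, prefix_append_right_inj,
    ← Nat.add_sub_cancel' hm, ← replicate_append_replicate, append_assoc]
  exact prefix_append _ _

lemma runWord_append_replicate_append_prefix (hkq : k ≤ q) (hqj : q + 1 < j) {m : ℕ}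
    (hm : m ≤ l q) (hpos : 0 < l (q + 1)) :
    runWord c l k q ++ replicate m (c q) ++ [c (if m < l q then q else q + 1)] <+:
      runWord c l k j := by
  split_ifs with hml
  · rw [append_assoc, ← replicate_succ']
    exact runWord_append_replicate_prefix hkq (by omega) hml
  · rw [show m = l q by omega, ← runWord_succ c l hkq, ← replicate_one]
    exact runWord_append_replicate_prefix (by omega) hqj hpos

lemma eq_runWord_append_replicate_of_prefix {b : List α} (hkj : k ≤ j)
    (hb : b <+: runWord c l k j) (hne : b ≠ []) :
    ∃ q m, k ≤ q ∧ q < j ∧ 0 < m ∧ m ≤ l q ∧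
      b = runWord c l k q ++ replicate m (c q) := by
  induction j, hkj using Nat.le_induction with
  | base => exact absurd (prefix_nil.1 (by simpa using hb)) hne
  | succ j hkj ih =>
    rw [runWord_succ c l hkj] at hb
    rcases prefix_or_eq_append_of_prefix_append hb with hb | ⟨t, ht, htj, rfl⟩
    · obtain ⟨q, m, hkq, hqj, h⟩ := ih hb
      exact ⟨q, m, hkq, by omega, h⟩
    · obtain ⟨hlen, htrep⟩ := prefix_replicate_iff.1 htj
      exact ⟨j, t.length, hkj, j.lt_succ_self, length_pos_iff.2 ht, hlen, by rw [← htrep]⟩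

lemma numRuns_runWord_append_replicate [DecidableEq α] (h : IsRunSeq c l k (q + 1))
    (hkq : k ≤ q) {m : ℕ} (hm : 0 < m) :
    numRuns (runWord c l k q ++ replicate m (c q)) = q - k + 1 := by
  induction hkq using Nat.decreasingInduction with
  | self => simpa [numRuns] using numRuns_replicate_append (L := []) hm (by simp)
  | of_succ k hkq ih =>
    have hhead := head?_runWord_append_replicate (h.tail.mono q.le_succ) hkq hm
    have hne : c k ≠ c (k + 1) := h.ne k le_rfl (by omega)
    rw [runWord_cons c l hkq, append_assoc,
      numRuns_replicate_append (h.pos k le_rfl (by omega)) (by simpa [hhead] using hne.symm),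
      ih h.tail]
    omega

end RunWord

section LongestBorder

variable {c : ℕ → α} {l : ℕ → ℕ} {k q j m : ℕ}

lemma longestBorder_last_run_eq_min (h : IsRunSeq c l k j) (hkj : k + 2 ≤ j) (hkq : k ≤ q)
    (hqj : q < j) (hm : 0 < m) (hml : m ≤ l q)
    (hb : IsBorder (runWord c l k q ++ replicate m (c q)) (runWord c l k j))
    (hmax : ∀ b', IsBorder b' (runWord c l k j) →
      b'.length ≤ (runWord c l k q ++ replicate m (c q)).length) :
    m = min (l q) (l (j - 1)) := by
  have hw : runWord c l k j = runWord c l k (j - 1) ++ replicate (l (j - 1)) (c (j - 1)) := by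
    simpa [Nat.sub_add_cancel (by omega : 1 ≤ j)] using
      runWord_succ c l (show k ≤ j - 1 by omega)
  have hsuf := hb.2.1
  rw [hw] at hsuf
  obtain ⟨hcq, hmj, hlast⟩ := append_replicate_suffix_append_replicate hm
    (h.pos (j - 1) (by omega) (by omega)) (getLast?_runWord_ne (h.mono (by omega)) hkq)
    (getLast?_runWord_ne (h.mono (by omega)) (by omega)) hsuf
  rcases hkq.eq_or_lt with rfl | hkq
  · by_contra hne
    have hprefix : replicate (m + 1) (c k) <+: runWord c l k j := by
      simpa using runWord_append_replicate_prefix (c := c) (l := l) le_rfl hqj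
        (show m + 1 ≤ l k by omega)
    have hsuffix : replicate (m + 1) (c k) <:+ runWord c l k j := by
      rw [hw, hcq]
      exact suffix_append_of_suffix
        (suffix_replicate_iff.2 ⟨by rw [length_replicate]; omega, by rw [length_replicate]⟩)
    have hlen : m + 1 < (runWord c l k j).length := by
      have := length_pos_iff.2 (runWord_ne_nil (h.mono (show j - 1 ≤ j by omega))
        (show k < j - 1 by omega))
      rw [hw, length_append, length_replicate]
      omega
    simpa using hmax _ ⟨hprefix, hsuffix, by simpa using hlen⟩
  · have := hlast (runWord_ne_nil (h.mono hqj.le) hkq)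
    omega

lemma exists_runWord_append_replicate_of_longestBorder [DecidableEq α] (h : IsRunSeq c l k j)
    (hkj : k < j) {b : List α} (hb : IsBorder b (runWord c l k j))
    (hmax : ∀ b' : List α, IsBorder b' (runWord c l k j) → b'.length ≤ b.length)
    {ℓ i z s : ℕ} (hℓ : ℓ = if 1 < j - k then numRuns b else 0) (hi : i = k + ℓ)
    (hz : z = if 0 < ℓ ∧ l (j - 1) < l (i - 1) then 1 else 0) (hs : s = i - z) :
    ∃ q m, k ≤ q ∧ q < j ∧ m ≤ l q ∧ b = runWord c l k q ++ replicate m (c q) ∧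
      s = if m < l q then q else q + 1 := by
  subst hs hz hi hℓ
  rcases eq_or_ne b [] with rfl | hb0
  · exact ⟨k, 0, le_rfl, hkj, Nat.zero_le _, by simp, by simp [numRuns, h.pos k le_rfl hkj]⟩
  obtain ⟨q, m, hkq, hqj, hm, hml, rfl⟩ := eq_runWord_append_replicate_of_prefix hkj.le hb.1 hb0
  refine ⟨q, m, hkq, hqj, hml, rfl, ?_⟩
  rcases (by omega : j = k + 1 ∨ k + 2 ≤ j) with rfl | hj2
  · obtain rfl : q = k := by omega
    have hlen : m < l q := by simpa [runWord_succ] using hb.2.2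
    simp [hlen]
  · have hmin := longestBorder_last_run_eq_min h hj2 hkq hqj hm hml hb hmax
    rw [if_pos (by omega), numRuns_runWord_append_replicate (h.mono hqj) hkq hm,
      show k + (q - k + 1) - 1 = q by omega]
    split_ifs <;> omega

end LongestBorder

theorem rle_next_case1_general [LinearOrder α] (c : ℕ → α) (l : ℕ → ℕ) (k j : ℕ) (hkj : k < j)
    (hlpos : ∀ t, k ≤ t → t ≤ j → 1 ≤ l t)
    (hcne : ∀ t, k ≤ t → t < j → c t ≠ c (t + 1))
    (b : List α) (hb : IsBorder b (runWord c l k j))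
    (hbmax : ∀ b' : List α, IsBorder b' (runWord c l k j) → b'.length ≤ b.length)
    (ℓ i z s : ℕ)
    (hℓ : ℓ = if 1 < j - k then numRuns b else 0)
    (hi : i = k + ℓ)
    (hz : z = if 0 < ℓ ∧ l (j - 1) < l (i - 1) then 1 else 0)
    (hs : s = i - z)
    (hlt : c j < c s) :
    ¬ InP' (runWord c l k (j + 1)) := by
  have hruns : IsRunSeq c l k (j + 1) :=
    ⟨fun t h1 h2 => hlpos t h1 (by omega), fun t h1 h2 => hcne t h1 (by omega)⟩
  obtain ⟨q, m, hkq, hqj, hml, rfl, rfl⟩ :=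
    exists_runWord_append_replicate_of_longestBorder (hruns.mono j.le_succ) hkj hb hbmax
      hℓ hi hz hs
  have hnext := runWord_append_replicate_append_prefix (c := c) (j := j + 1) hkq (by omega) hml
    (hruns.pos (q + 1) (by omega) (by omega))
  rw [runWord_succ c l hkj.le] at hnext ⊢
  exact not_inP'_append_replicate_of_lt hb.2.1 hb.2.2 hnext (hruns.pos j hkj.le j.lt_succ_self) hlt

/-- Under the run invariant, if `c_j < c_s` then
`c_k^{l_k} ⋯ c_{j-1}^{l_{j-1}} c_j^{l_j} ∉ P'`. -/
theorem rle_next_case1 [LinearOrder α] (c : ℕ → α) (l : ℕ → ℕ) (k j : ℕ) (hkj : k < j)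
    (hlpos : ∀ t, k ≤ t → t ≤ j → 1 ≤ l t)
    (hcne : ∀ t, k ≤ t → t < j → c t ≠ c (t + 1))
    (hP' : InP' (runWord c l k j))
    (b : List α) (hb : IsBorder b (runWord c l k j))
    (hbmax : ∀ b' : List α, IsBorder b' (runWord c l k j) → b'.length ≤ b.length)
    (ℓ i z s : ℕ)
    (hℓ : ℓ = if 1 < j - k then numRuns b else 0)
    (hi : i = k + ℓ)
    (hz : z = if 0 < ℓ ∧ l (j - 1) < l (i - 1) then 1 else 0)
    (hs : s = i - z)
    (hlt : c j < c s) :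
    ¬ InP' (runWord c l k (j + 1)) :=
  rle_next_case1_general c l k j hkj hlpos hcne b hb hbmax ℓ i z s hℓ hi hz hs hlt
end
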